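/- arXiv:1406.5973 — 3 statements merged into one kernel-verified Lean document; each statement's English description precedes it below -/
import Mathlib

section
/- If the bivariate distribution of (V_1,V_2) with Uniform[0,1] margins satisfies P(V_1 ≤ t, V_2 ≤ t) = t^θ for all t ∈ [0,1] and some θ ∈ [1,2], then the madogram ν = (1/2)E[|V_1 - V_2|] equals θ/(1+θ) - 1/2. -/
open MeasureTheory ProbabilityTheory Set

/-- `V` is uniformly distributed on `[0,1]`: its CDF on `[0,1]` is `t ↦ t`. -/
def IsUniform01 {Ω : Type*} [MeasurableSpace Ω] (μ : Measure Ω) (V : Ω → ℝ) : Prop :=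
  Measurable V ∧ ∀ t ∈ Icc (0 : ℝ) 1, μ {ω | V ω ≤ t} = ENNReal.ofReal t

/-!
`E[|V₁ - V₂|] = 2 E[max V₁ V₂] - E[V₁] - E[V₂]`, and each expectation of a `[0,1]`-valued
variable is `∫₀¹ (1 - F t) dt` with `F` its CDF (layer cake). For the uniform margins this is
`1/2`; the CDF of the maximum is `P(V₁ ≤ t, V₂ ≤ t) = t ^ θ`, giving `θ / (θ + 1)`.
-/

lemma integrable_of_ae_mem_Icc {Ω : Type*} [MeasurableSpace Ω] {μ : Measure Ω}
    [IsFiniteMeasure μ] {X : Ω → ℝ} (hX : AEStronglyMeasurable X μ)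
    (hI : ∀ᵐ ω ∂μ, X ω ∈ Icc (0 : ℝ) 1) : Integrable X μ :=
  .of_bound hX 1 <| hI.mono fun _ h ↦ by rw [Real.norm_of_nonneg h.1]; exact h.2

section CDF

variable {Ω : Type*} [MeasurableSpace Ω] {μ : Measure Ω} [IsProbabilityMeasure μ] {X : Ω → ℝ}

lemma ae_mem_Icc_of_cdf (hX : Measurable X) (h0 : μ {ω | X ω ≤ 0} = 0)
    (h1 : μ {ω | X ω ≤ 1} = 1) : ∀ᵐ ω ∂μ, X ω ∈ Icc (0 : ℝ) 1 := by
  have hpos : ∀ᵐ ω ∂μ, 0 < X ω := ae_iff.2 (by simpa only [not_lt] using h0)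
  have hle : ∀ᵐ ω ∂μ, X ω ≤ 1 :=
    ae_iff.2 ((prob_compl_eq_zero_iff (hX measurableSet_Iic)).2 h1)
  filter_upwards [hpos, hle] with ω h₀ h₁ using ⟨h₀.le, h₁⟩

lemma integral_eq_intervalIntegral_one_sub_cdf (hX : Measurable X)
    (hI : ∀ᵐ ω ∂μ, X ω ∈ Icc (0 : ℝ) 1) :
    ∫ ω, X ω ∂μ = ∫ t in (0 : ℝ)..1, (1 - μ.real {ω | X ω ≤ t}) := by
  rw [intervalIntegral.integral_of_le zero_le_one,
    (integrable_of_ae_mem_Icc hX.aestronglyMeasurable hI).integral_eq_integral_Ioc_meas_le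
      (hI.mono fun _ h ↦ h.1) (hI.mono fun _ h ↦ h.2)]
  refine integral_congr_ae ?_
  filter_upwards [meas_le_ae_eq_meas_lt μ (volume.restrict (Ioc 0 1)) X] with t ht
  have hlt : {ω | t < X ω} = {ω | X ω ≤ t}ᶜ := by ext; simp
  rw [measureReal_def, ht, hlt, ← measureReal_def,
    probReal_compl_eq_one_sub (measurableSet_le hX measurable_const)]

lemma integrable_and_integral_eq_of_cdf (hX : Measurable X) (F : ℝ → ℝ)
    (hcdf : ∀ t ∈ Icc (0 : ℝ) 1, μ {ω | X ω ≤ t} = ENNReal.ofReal (F t))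
    (hF0 : F 0 = 0) (hF1 : F 1 = 1) (hF_nonneg : ∀ t ∈ Icc (0 : ℝ) 1, 0 ≤ F t) :
    Integrable X μ ∧ ∫ ω, X ω ∂μ = ∫ t in (0 : ℝ)..1, (1 - F t) := by
  have hI : ∀ᵐ ω ∂μ, X ω ∈ Icc (0 : ℝ) 1 :=
    ae_mem_Icc_of_cdf hX (by simpa [hF0] using hcdf 0 (by simp))
      (by simpa [hF1] using hcdf 1 (by simp))
  refine ⟨integrable_of_ae_mem_Icc hX.aestronglyMeasurable hI, ?_⟩
  rw [integral_eq_intervalIntegral_one_sub_cdf hX hI]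
  refine intervalIntegral.integral_congr fun t ht ↦ ?_
  rw [uIcc_of_le zero_le_one] at ht
  simp only [measureReal_def, hcdf t ht, ENNReal.toReal_ofReal (hF_nonneg t ht)]

end CDF

lemma IsUniform01.integrable_and_integral_eq {Ω : Type*} [MeasurableSpace Ω] {μ : Measure Ω}
    [IsProbabilityMeasure μ] {V : Ω → ℝ} (hV : IsUniform01 μ V) :
    Integrable V μ ∧ ∫ ω, V ω ∂μ = 1 / 2 := by
  obtain ⟨hint, hE⟩ :=
    integrable_and_integral_eq_of_cdf hV.1 id hV.2 rfl rfl fun _ ht ↦ ht.1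
  refine ⟨hint, hE.trans ?_⟩
  simp only [id, intervalIntegral.integral_sub intervalIntegrable_const
    intervalIntegral.intervalIntegrable_id, integral_id]
  norm_num

lemma intervalIntegral_one_sub_rpow {θ : ℝ} (hθ : -1 < θ) :
    ∫ t in (0 : ℝ)..1, (1 - t ^ θ) = θ / (θ + 1) := by
  have hθ' : θ + 1 ≠ 0 := by linarith
  rw [intervalIntegral.integral_sub intervalIntegrable_const
    (intervalIntegral.intervalIntegrable_rpow' hθ), integral_rpow (Or.inl hθ),
    Real.one_rpow, Real.zero_rpow hθ', intervalIntegral.integral_const, smul_eq_mul]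
  field_simp
  ring

lemma abs_sub_eq_two_mul_max_sub_add {a b : ℝ} : |a - b| = 2 * max a b - (a + b) := by
  rw [← max_sub_min_eq_abs', ← min_add_max]
  ring

theorem madogram_extremal_coefficient {Ω : Type*} [MeasurableSpace Ω] (μ : Measure Ω)
    [IsProbabilityMeasure μ] (V₁ V₂ : Ω → ℝ)
    (h₁ : IsUniform01 μ V₁) (h₂ : IsUniform01 μ V₂)
    (θ : ℝ) (hθ : θ ∈ Icc (1 : ℝ) 2)
    (hjoint : ∀ t ∈ Icc (0 : ℝ) 1, μ {ω | V₁ ω ≤ t ∧ V₂ ω ≤ t} = ENNReal.ofReal (t ^ θ)) :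
    (1 / 2) * ∫ ω, |V₁ ω - V₂ ω| ∂μ = θ / (1 + θ) - 1 / 2 := by
  have hθ_pos : 0 < θ := by linarith [hθ.1]
  obtain ⟨hint₁, hE₁⟩ := h₁.integrable_and_integral_eq
  obtain ⟨hint₂, hE₂⟩ := h₂.integrable_and_integral_eq
  have hcdf_max : ∀ t ∈ Icc (0 : ℝ) 1,
      μ {ω | max (V₁ ω) (V₂ ω) ≤ t} = ENNReal.ofReal (t ^ θ) := by
    simpa only [max_le_iff] using hjoint
  obtain ⟨hint_max, hE_max⟩ := integrable_and_integral_eq_of_cdf (h₁.1.max h₂.1) _ hcdf_max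
    (Real.zero_rpow hθ_pos.ne') (Real.one_rpow θ) fun t ht ↦ Real.rpow_nonneg ht.1 θ
  rw [intervalIntegral_one_sub_rpow (by linarith)] at hE_max
  have hE_abs : ∫ ω, |V₁ ω - V₂ ω| ∂μ
      = 2 * ∫ ω, max (V₁ ω) (V₂ ω) ∂μ - (∫ ω, V₁ ω ∂μ + ∫ ω, V₂ ω ∂μ) := by
    have hint_sum : Integrable (fun ω ↦ V₁ ω + V₂ ω) μ := hint₁.add hint₂
    simp only [abs_sub_eq_two_mul_max_sub_add]
    rw [integral_sub (hint_max.const_mul 2) hint_sum, integral_const_mul,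
      integral_add hint₁ hint₂]
  rw [hE_abs, hE_max, hE₁, hE₂, add_comm 1 θ]
  ring
end

section
/- Suppose (V_1,...,V_k) has Uniform[0,1] margins and for every nonempty I ⊆ {1,...,k} there is θ_I ≥ 1 with P(V_i ≤ t for all i ∈ I) = t^{θ_I} for t ∈ [0,1]. Then the variogram v = 1 - ((k+1)/(k-1))E[max_j V_j - min_j V_j] equals 1 - ((k+1)/(k-1))·(θ_{{1,...,k}}/(1+θ_{{1,...,k}}) - Σ_{∅≠I} (-1)^{|I|+1} θ_I/(1+θ_I)). -/
/-!
Min-max inclusion-exclusion writes `min_j V_j` as the signed sum of the maxima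
`max_{i ∈ I} V_i` over nonempty `I`. The diagonal hypothesis says exactly that `max_{i ∈ I} V_i`
has CDF `t ↦ t ^ θ_I` on `[0,1]`, so by the layer-cake formula its mean is
`∫₀¹ (1 - t ^ θ_I) dt = θ_I / (1 + θ_I)`.
-/

open MeasureTheory ProbabilityTheory Set Finset

namespace Finset

variable {ι α : Type*}

section supOrZero

variable [SemilatticeSup α] [Zero α] {I : Finset ι}

/-- `max_{i ∈ I} f i`, with the junk value `0` at `I = ∅`. -/
noncomputable def supOrZero (I : Finset ι) (f : ι → α) : α :=
  if h : I.Nonempty then I.sup' h f else 0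

@[simp]
theorem supOrZero_empty (f : ι → α) : (∅ : Finset ι).supOrZero f = 0 :=
  dif_neg not_nonempty_empty

theorem supOrZero_of_nonempty (hI : I.Nonempty) (f : ι → α) : I.supOrZero f = I.sup' hI f :=
  dif_pos hI

theorem supOrZero_insert [DecidableEq ι] (a : ι) (hI : I.Nonempty) (f : ι → α) :
    (insert a I).supOrZero f = I.supOrZero (f a ⊔ f ·) := by
  rw [supOrZero_of_nonempty (insert_nonempty a I), supOrZero_of_nonempty hI, sup'_insert hI]
  exact apply_sup'_eq_sup'_comp hI (f a ⊔ ·) fun _ _ => sup_sup_distrib_left _ _ _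

end supOrZero

variable [LinearOrder α] [CommRing α]

theorem inf'_eq_sum_powerset_supOrZero [DecidableEq ι] {s : Finset ι} (hs : s.Nonempty)
    (f : ι → α) : s.inf' hs f = ∑ I ∈ s.powerset, (-1) ^ (#I + 1) * I.supOrZero f := by
  induction hs using Nonempty.cons_induction generalizing f with
  | singleton a =>
    rw [inf'_singleton, ← insert_empty, sum_powerset_insert (notMem_empty a)]
    simp [supOrZero_of_nonempty]
  | cons a s ha hs ih =>
    -- the subsets containing `a` contribute `f a - min_s (f a ⊔ f ·) = f a - (f a ⊔ min_s f)`
    have hinsert : ∀ I ∈ s.powerset, (-1) ^ (#(insert a I) + 1) * (insert a I).supOrZero f =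
        (if I = ∅ then f a else 0) - (-1) ^ (#I + 1) * I.supOrZero (f a ⊔ f ·) := by
      intro I hI
      rw [card_insert_of_notMem fun h => ha (mem_powerset.1 hI h)]
      rcases I.eq_empty_or_nonempty with rfl | hI
      · simp [supOrZero_of_nonempty]
      · rw [supOrZero_insert a hI, if_neg hI.ne_empty]
        ring
    rw [inf'_cons hs, cons_eq_insert, sum_powerset_insert ha, sum_congr rfl hinsert,
      sum_sub_distrib, sum_ite_eq', if_pos (empty_mem_powerset s), ← ih, ← ih,
      ← inf'_sup_distrib_left]
    linear_combination min_add_max (f a) (s.inf' hs f)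

theorem inf'_univ_eq_sum_sup' [Fintype ι] [DecidableEq ι] [Nonempty ι] (f : ι → α) :
    univ.inf' univ_nonempty f =
      ∑ I : {I : Finset ι // I.Nonempty}, (-1) ^ (#I.1 + 1) * I.1.sup' I.2 f := by
  rw [inf'_eq_sum_powerset_supOrZero, powerset_univ,
    ← sum_filter_of_ne (p := Finset.Nonempty) fun I _ hI => ?_,
    sum_subtype (p := Finset.Nonempty) _ fun I => by simp]
  · exact sum_congr rfl fun I _ => by rw [supOrZero_of_nonempty I.2]
  · rw [nonempty_iff_ne_empty]
    rintro rfl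
    simp at hI

end Finset

section LayerCake

variable {Ω : Type*} [MeasurableSpace Ω] {μ : Measure Ω} [IsProbabilityMeasure μ] {X : Ω → ℝ}
  {θ : ℝ}

theorem ae_mem_Icc_of_cdf_rpow (hX : Measurable X) (hθ : 0 < θ)
    (hcdf : ∀ t ∈ Icc (0 : ℝ) 1, μ {ω | X ω ≤ t} = ENNReal.ofReal (t ^ θ)) :
    ∀ᵐ ω ∂μ, X ω ∈ Set.Icc 0 1 := by
  have h0 : μ {ω | X ω ≤ 0} = 0 := by
    rw [hcdf 0 (left_mem_Icc.2 zero_le_one), Real.zero_rpow hθ.ne', ENNReal.ofReal_zero]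
  have h1 : μ {ω | X ω ≤ 1} = μ univ := by
    rw [hcdf 1 (right_mem_Icc.2 zero_le_one), Real.one_rpow, ENNReal.ofReal_one, measure_univ]
  filter_upwards [measure_eq_zero_iff_ae_notMem.1 h0,
    (ae_iff_measure_eq (measurableSet_le hX measurable_const).nullMeasurableSet).2 h1]
    with ω hpos hle using ⟨(not_le.1 hpos).le, hle⟩

theorem integrable_of_cdf_rpow (hX : Measurable X) (hθ : 0 < θ)
    (hcdf : ∀ t ∈ Icc (0 : ℝ) 1, μ {ω | X ω ≤ t} = ENNReal.ofReal (t ^ θ)) :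
    Integrable X μ :=
  .of_bound hX.aestronglyMeasurable 1 <| (ae_mem_Icc_of_cdf_rpow hX hθ hcdf).mono
    fun _ h => by rw [Real.norm_of_nonneg h.1]; exact h.2

theorem measureReal_lt_of_cdf_rpow (hX : Measurable X)
    (hcdf : ∀ t ∈ Icc (0 : ℝ) 1, μ {ω | X ω ≤ t} = ENNReal.ofReal (t ^ θ)) {t : ℝ}
    (ht : t ∈ Icc (0 : ℝ) 1) : μ.real {ω | t < X ω} = 1 - t ^ θ := by
  have hcompl : {ω | t < X ω} = {ω | X ω ≤ t}ᶜ := by ext; simp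
  rw [hcompl, probReal_compl_eq_one_sub (measurableSet_le hX measurable_const), measureReal_def,
    hcdf t ht, ENNReal.toReal_ofReal (Real.rpow_nonneg ht.1 θ)]

theorem integral_of_cdf_rpow (hX : Measurable X) (hθ : 0 < θ)
    (hcdf : ∀ t ∈ Icc (0 : ℝ) 1, μ {ω | X ω ≤ t} = ENNReal.ofReal (t ^ θ)) :
    ∫ ω, X ω ∂μ = θ / (1 + θ) := by
  have hae := ae_mem_Icc_of_cdf_rpow hX hθ hcdf
  rw [(integrable_of_cdf_rpow hX hθ hcdf).integral_eq_integral_meas_lt (hae.mono fun _ h => h.1),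
    setIntegral_eq_of_subset_of_forall_sdiff_eq_zero measurableSet_Ioi Ioc_subset_Ioi_self,
    ← intervalIntegral.integral_of_le zero_le_one,
    intervalIntegral.integral_congr (g := fun t => 1 - t ^ θ),
    intervalIntegral.integral_sub intervalIntegrable_const
      (intervalIntegral.intervalIntegrable_rpow' (by linarith)),
    integral_rpow (by left; linarith)]
  · rw [intervalIntegral.integral_const, smul_eq_mul, Real.one_rpow,
      Real.zero_rpow (by linarith)]
    field_simp
    ring
  · rw [Set.uIcc_of_le zero_le_one]
    exact fun t ht => measureReal_lt_of_cdf_rpow hX hcdf ht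
  · rintro t ⟨ht0, ht1⟩
    have h1t : 1 < t := not_le.1 fun h => ht1 ⟨ht0, h⟩
    rw [measureReal_eq_zero_iff, measure_eq_zero_iff_ae_notMem]
    exact hae.mono fun ω hω hlt => (h1t.trans hlt).not_ge hω.2

end LayerCake

theorem variogram_via_extremal_coefficients {Ω : Type*} [MeasurableSpace Ω] (μ : Measure Ω)
    [IsProbabilityMeasure μ] (k : ℕ) (hk : 2 ≤ k) (V : Fin k → Ω → ℝ)
    (hunif : ∀ j, IsUniform01 μ (V j))
    (θ : Finset (Fin k) → ℝ) (hθ : ∀ I, 1 ≤ θ I)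
    (hdiag : ∀ I : Finset (Fin k), I.Nonempty → ∀ t ∈ Icc (0 : ℝ) 1,
      μ {ω | ∀ i ∈ I, V i ω ≤ t} = ENNReal.ofReal (t ^ θ I)) :
    haveI : NeZero k := ⟨by omega⟩
    1 - ((k + 1 : ℝ) / (k - 1)) * ∫ ω, ((⨆ j, V j ω) - ⨅ j, V j ω) ∂μ =
      1 - ((k + 1 : ℝ) / (k - 1)) *
        (θ Finset.univ / (1 + θ Finset.univ) -
          ∑ I : {I : Finset (Fin k) // I.Nonempty},
            (-1 : ℝ) ^ (I.1.card + 1) * (θ I.1 / (1 + θ I.1))) := by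
  have : NeZero k := ⟨by omega⟩
  set M : {I : Finset (Fin k) // I.Nonempty} → Ω → ℝ := fun I ω => I.1.sup' I.2 (V · ω)
  have hM_meas (I) : Measurable (M I) := by
    simpa only [M, ← Finset.sup'_apply] using measurable_sup' I.2 fun i _ => (hunif i).1
  have hM_cdf (I) : ∀ t ∈ Icc (0 : ℝ) 1, μ {ω | M I ω ≤ t} = ENNReal.ofReal (t ^ θ I.1) := by
    simpa only [M, sup'_le_iff] using hdiag I.1 I.2
  have hθ_pos (I) : 0 < θ I := zero_lt_one.trans_le (hθ I)
  have hM_int (I) : Integrable (M I) μ :=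
    integrable_of_cdf_rpow (hM_meas I) (hθ_pos _) (hM_cdf I)
  have hM_mean (I) : ∫ ω, M I ω ∂μ = θ I.1 / (1 + θ I.1) :=
    integral_of_cdf_rpow (hM_meas I) (hθ_pos _) (hM_cdf I)
  have hmax : (fun ω => ⨆ j, V j ω) = M ⟨univ, univ_nonempty⟩ :=
    funext fun ω => (sup'_univ_eq_ciSup _).symm
  have hmin : (fun ω => ⨅ j, V j ω) = fun ω => ∑ I, (-1) ^ (#I.1 + 1) * M I ω :=
    funext fun ω => (inf'_univ_eq_ciInf _).symm.trans (inf'_univ_eq_sum_sup' _)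
  have hmin_int : Integrable (fun ω => ⨅ j, V j ω) μ := by
    rw [hmin]
    exact integrable_finsetSum _ fun I _ => (hM_int I).const_mul _
  rw [integral_sub (hmax ▸ hM_int _) hmin_int, hmax, hmin, hM_mean,
    integral_finsetSum _ fun I _ => (hM_int I).const_mul _]
  simp_rw [integral_const_mul, hM_mean]
end

section
/- Under the same concordance assumption, E[min_j V_j] ≥ E[min_j W_j], and consequently the variogram satisfies v(V_1,...,V_k) ≥ v(W_1,...,W_k). -/
open MeasureTheory ProbabilityTheory Set

-- key comparison lemma via layer-cake
lemma integral_mono_of_meas_lt {Ω : Type*} [MeasurableSpace Ω] (μ : Measure Ω)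
    [IsProbabilityMeasure μ] {f g : Ω → ℝ} (hf : Measurable f) (hg : Measurable g)
    (hf0 : 0 ≤ᵐ[μ] f) (hg0 : 0 ≤ᵐ[μ] g) (hg1 : g ≤ᵐ[μ] 1)
    (h : ∀ t, μ {ω | t < f ω} ≤ μ {ω | t < g ω}) :
    ∫ ω, f ω ∂μ ≤ ∫ ω, g ω ∂μ := by
  rw [integral_eq_lintegral_of_nonneg_ae hf0 hf.aestronglyMeasurable,
    integral_eq_lintegral_of_nonneg_ae hg0 hg.aestronglyMeasurable]
  have hgle : ∫⁻ ω, ENNReal.ofReal (g ω) ∂μ ≤ 1 := by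
    calc ∫⁻ ω, ENNReal.ofReal (g ω) ∂μ ≤ ∫⁻ _, 1 ∂μ := by
          refine lintegral_mono_ae ?_
          filter_upwards [hg1] with ω hω
          simpa using ENNReal.ofReal_le_one.2 hω
      _ = 1 := by simp
  refine ENNReal.toReal_mono (by exact ne_top_of_le_ne_top (by simp) hgle) ?_
  rw [lintegral_eq_lintegral_meas_lt μ hf0 hf.aemeasurable,
    lintegral_eq_lintegral_meas_lt μ hg0 hg.aemeasurable]
  exact lintegral_mono fun t => h t

lemma uniform01_ae {Ω : Type*} [MeasurableSpace Ω] (μ : Measure Ω)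
    [IsProbabilityMeasure μ] {X : Ω → ℝ} (hX : IsUniform01 μ X) :
    ∀ᵐ ω ∂μ, 0 < X ω ∧ X ω ≤ 1 := by
  have h0 : μ {ω | X ω ≤ 0} = 0 := by simpa using hX.2 0 (by norm_num)
  have h1 : μ {ω | X ω ≤ 1}ᶜ = 0 := by
    have := hX.2 1 (by norm_num)
    rw [prob_compl_eq_one_sub (show MeasurableSet {ω | X ω ≤ 1} from hX.1 measurableSet_Iic)]
    simp [this]
  have a0 : ∀ᵐ ω ∂μ, 0 < X ω := by
    rw [ae_iff]; convert h0 using 2; ext ω; simp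
  have a1 : ∀ᵐ ω ∂μ, X ω ≤ 1 := by
    rw [ae_iff]; exact h1
  filter_upwards [a0, a1] with ω h h' using ⟨h, h'⟩

theorem concordance_variogram_mono {Ω : Type*} [MeasurableSpace Ω] (μ : Measure Ω)
    [IsProbabilityMeasure μ] (k : ℕ) (hk : 2 ≤ k) (V W : Fin k → Ω → ℝ)
    (hV : ∀ j, IsUniform01 μ (V j)) (hW : ∀ j, IsUniform01 μ (W j))
    (hconc : ∀ t : Fin k → ℝ,
      μ {ω | ∀ j, W j ω ≤ t j} ≤ μ {ω | ∀ j, V j ω ≤ t j} ∧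
      μ {ω | ∀ j, t j < W j ω} ≤ μ {ω | ∀ j, t j < V j ω}) :
    haveI : NeZero k := ⟨by omega⟩
    ∫ ω, (⨅ j, W j ω) ∂μ ≤ ∫ ω, (⨅ j, V j ω) ∂μ ∧
      1 - ((k + 1 : ℝ) / (k - 1)) * ∫ ω, ((⨆ j, W j ω) - ⨅ j, W j ω) ∂μ ≤
        1 - ((k + 1 : ℝ) / (k - 1)) * ∫ ω, ((⨆ j, V j ω) - ⨅ j, V j ω) ∂μ := by
  haveI : NeZero k := ⟨by omega⟩
  -- measurability
  have mVi : Measurable fun ω => ⨅ j, V j ω := Measurable.iInf fun j => (hV j).1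
  have mWi : Measurable fun ω => ⨅ j, W j ω := Measurable.iInf fun j => (hW j).1
  have mVs : Measurable fun ω => ⨆ j, V j ω := Measurable.iSup fun j => (hV j).1
  have mWs : Measurable fun ω => ⨆ j, W j ω := Measurable.iSup fun j => (hW j).1
  -- ae bounds
  have aV : ∀ᵐ ω ∂μ, ∀ j, 0 < V j ω ∧ V j ω ≤ 1 :=
    (ae_all_iff).2 fun j => uniform01_ae μ (hV j)
  have aW : ∀ᵐ ω ∂μ, ∀ j, 0 < W j ω ∧ W j ω ≤ 1 :=
    (ae_all_iff).2 fun j => uniform01_ae μ (hW j)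
  have boundsV : ∀ᵐ ω ∂μ, 0 ≤ (⨅ j, V j ω) ∧ (⨆ j, V j ω) ≤ 1 := by
    filter_upwards [aV] with ω h
    exact ⟨le_ciInf fun j => (h j).1.le, ciSup_le fun j => (h j).2⟩
  have boundsW : ∀ᵐ ω ∂μ, 0 ≤ (⨅ j, W j ω) ∧ (⨆ j, W j ω) ≤ 1 := by
    filter_upwards [aW] with ω h
    exact ⟨le_ciInf fun j => (h j).1.le, ciSup_le fun j => (h j).2⟩
  -- set identities
  have sinf : ∀ (X : Fin k → Ω → ℝ) (t : ℝ),
      {ω | t < ⨅ j, X j ω} = {ω | ∀ j, t < X j ω} := by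
    intro X t; ext ω
    simp only [mem_setOf_eq]
    constructor
    · intro h j; exact lt_of_lt_of_le h (ciInf_le (Set.Finite.bddBelow (finite_range _)) j)
    · intro h
      obtain ⟨j, hj⟩ := exists_eq_ciInf_of_finite (f := fun j => X j ω)
      rw [← hj]; exact h j
  have ssup : ∀ (X : Fin k → Ω → ℝ) (t : ℝ),
      {ω | ∀ j, X j ω ≤ t} = {ω | (⨆ j, X j ω) ≤ t} := by
    intro X t; ext ω
    simp only [mem_setOf_eq]
    exact (ciSup_le_iff (Set.Finite.bddAbove (finite_range _))).symm
  -- min comparison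
  have hmin : ∫ ω, (⨅ j, W j ω) ∂μ ≤ ∫ ω, (⨅ j, V j ω) ∂μ := by
    refine integral_mono_of_meas_lt μ mWi mVi ?_ ?_ ?_ ?_
    · filter_upwards [boundsW] with ω h using h.1
    · filter_upwards [boundsV] with ω h using h.1
    · filter_upwards [aV] with ω h
      exact le_trans (ciInf_le (Set.Finite.bddBelow (finite_range _)) 0) (h 0).2
    · intro t
      rw [sinf W t, sinf V t]
      exact (hconc fun _ => t).2
  -- max comparison
  have hmax : ∫ ω, (⨆ j, V j ω) ∂μ ≤ ∫ ω, (⨆ j, W j ω) ∂μ := by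
    refine integral_mono_of_meas_lt μ mVs mWs ?_ ?_ ?_ ?_
    · filter_upwards [aV] with ω h
      exact le_trans (h 0).1.le (le_ciSup (f := fun j => V j ω) (Set.Finite.bddAbove (finite_range _)) (0 : Fin k))
    · filter_upwards [aW] with ω h
      exact le_trans (h 0).1.le (le_ciSup (f := fun j => W j ω) (Set.Finite.bddAbove (finite_range _)) (0 : Fin k))
    · filter_upwards [boundsW] with ω h using h.2
    · intro t
      have hVs : MeasurableSet {ω | (⨆ j, V j ω) ≤ t} := mVs measurableSet_Iic
      have hWs : MeasurableSet {ω | (⨆ j, W j ω) ≤ t} := mWs measurableSet_Iic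
      have hc := (hconc fun _ => t).1
      rw [ssup W t, ssup V t] at hc
      have e1 : {ω | t < ⨆ j, V j ω} = {ω | (⨆ j, V j ω) ≤ t}ᶜ := by ext ω; simp
      have e2 : {ω | t < ⨆ j, W j ω} = {ω | (⨆ j, W j ω) ≤ t}ᶜ := by ext ω; simp
      rw [e1, e2, prob_compl_eq_one_sub hVs, prob_compl_eq_one_sub hWs]
      exact tsub_le_tsub_left hc 1
  refine ⟨hmin, ?_⟩
  -- integrability
  have integ : ∀ (f : Ω → ℝ), Measurable f → (∀ᵐ ω ∂μ, 0 ≤ f ω ∧ f ω ≤ 1) → Integrable f μ := by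
    intro f hf hb
    refine Integrable.mono' (integrable_const 1) hf.aestronglyMeasurable ?_
    filter_upwards [hb] with ω h
    rw [Real.norm_eq_abs, abs_le]; exact ⟨by linarith [h.1], h.2⟩
  have iVi : Integrable (fun ω => ⨅ j, V j ω) μ := by
    refine integ _ mVi ?_
    filter_upwards [boundsV, aV] with ω h h'
    exact ⟨h.1, le_trans (ciInf_le (Set.Finite.bddBelow (finite_range _)) 0) (h' 0).2⟩
  have iWi : Integrable (fun ω => ⨅ j, W j ω) μ := by
    refine integ _ mWi ?_
    filter_upwards [boundsW, aW] with ω h h'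
    exact ⟨h.1, le_trans (ciInf_le (Set.Finite.bddBelow (finite_range _)) 0) (h' 0).2⟩
  have iVs : Integrable (fun ω => ⨆ j, V j ω) μ := by
    refine integ _ mVs ?_
    filter_upwards [boundsV, aV] with ω h h'
    exact ⟨le_trans (h' 0).1.le (le_ciSup (f := fun j => V j ω) (Set.Finite.bddAbove (finite_range _)) (0 : Fin k)), h.2⟩
  have iWs : Integrable (fun ω => ⨆ j, W j ω) μ := by
    refine integ _ mWs ?_
    filter_upwards [boundsW, aW] with ω h h'
    exact ⟨le_trans (h' 0).1.le (le_ciSup (f := fun j => W j ω) (Set.Finite.bddAbove (finite_range _)) (0 : Fin k)), h.2⟩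
  have eV : ∫ ω, ((⨆ j, V j ω) - ⨅ j, V j ω) ∂μ
      = (∫ ω, (⨆ j, V j ω) ∂μ) - ∫ ω, (⨅ j, V j ω) ∂μ := integral_sub iVs iVi
  have eW : ∫ ω, ((⨆ j, W j ω) - ⨅ j, W j ω) ∂μ
      = (∫ ω, (⨆ j, W j ω) ∂μ) - ∫ ω, (⨅ j, W j ω) ∂μ := integral_sub iWs iWi
  have hc : (0 : ℝ) ≤ ((k : ℝ) + 1) / ((k : ℝ) - 1) := by
    have : (2 : ℝ) ≤ (k : ℝ) := by exact_mod_cast hk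
    apply div_nonneg <;> linarith
  refine sub_le_sub_left (mul_le_mul_of_nonneg_left ?_ hc) 1
  rw [eV, eW]
  linarith
end
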